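/- Let α > 0, A > 0, e_0 > 0, and let 0 < μ_1 ≤ μ_k for an integer k ≥ 1. Then the inequality (α/μ_1)(e_0 − A) ≥ (α/μ_k)(e_0 − A/k) holds if and only if e_0 (μ_k − μ_1) ≥ A (μ_k − μ_1/k). In particular, if e_0(μ_k − μ_1) ≥ A(μ_k − μ_1/k) for every k ∈ {2, …, n}, then the initial rate of decrease of the error bound, (α/μ_k)(e_0 − A/k), is maximized at k = 1. -/
import Mathlib


/-- The initial rate of decrease of the error bound,
`(α/μ_k)(e_0 − A/k)`, is maximized at `k = 1` when the initial error is large enough. -/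
theorem initial_rate_maximized_at_one
    (α A e0 : ℝ) (n : ℕ) (μ : ℕ → ℝ)
    (hα : 0 < α) (hA : 0 < A) (he0 : 0 < e0)
    (hμ1 : 0 < μ 1) (hμmono : ∀ k : ℕ, 1 ≤ k → μ 1 ≤ μ k) :
    (∀ k : ℕ, 1 ≤ k →
      ((α / μ 1) * (e0 - A) ≥ (α / μ k) * (e0 - A / k)
        ↔ e0 * (μ k - μ 1) ≥ A * (μ k - μ 1 / k))) ∧
    ((∀ k : ℕ, 2 ≤ k → k ≤ n → e0 * (μ k - μ 1) ≥ A * (μ k - μ 1 / k)) →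
      ∀ k : ℕ, 1 ≤ k → k ≤ n →
        (α / μ k) * (e0 - A / k) ≤ (α / μ 1) * (e0 - A)) := by
  have iff_part : ∀ k : ℕ, 1 ≤ k →
      ((α / μ 1) * (e0 - A) ≥ (α / μ k) * (e0 - A / k)
        ↔ e0 * (μ k - μ 1) ≥ A * (μ k - μ 1 / k)) := by
    intro k hk
    have hμk : 0 < μ k := lt_of_lt_of_le hμ1 (hμmono k hk)
    rw [ge_iff_le, ge_iff_le]
    have h1 : α / μ k * (e0 - A / k) ≤ α / μ 1 * (e0 - A) ↔
        (e0 - A / k) * μ 1 ≤ (e0 - A) * μ k := by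
      rw [div_mul_eq_mul_div, div_mul_eq_mul_div, div_le_div_iff₀ hμk hμ1]
      constructor <;> intro h <;> nlinarith
    rw [h1]
    have heq : (A / (k : ℝ)) * μ 1 = A * (μ 1 / k) := by ring
    constructor <;> intro h <;> nlinarith [heq]
  refine ⟨iff_part, ?_⟩
  intro h k hk hkn
  rcases eq_or_lt_of_le hk with h1 | h2
  · rw [← h1]
    norm_num
  · exact (iff_part k hk).mpr (h k h2 hkn)
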